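/- Chain lemma: let M = (ρ, E) be a matroid with (r, δ)-locality, ρ(E) = k > 0, and with E a cyclic flat. Then there is a chain Y_0 ⊊ Y_1 ⊊ ⋯ ⊊ Y_m = E of cyclic flats, with Y_0 the minimal cyclic flat, such that for each j, ρ(Y_j) ≤ ρ(Y_{j−1}) + r and η(Y_j) ≥ η(Y_{j−1}) + (δ − 1), where η(X) = |X| − ρ(X). -/

import Mathlib

open Finset

structure FinMatroid (α : Type*) [DecidableEq α] where
  E : Finset α
  rk : Finset α → ℕ
  rk_le_card : ∀ X, X ⊆ E → rk X ≤ X.card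
  rk_mono : ∀ X Y, X ⊆ Y → Y ⊆ E → rk X ≤ rk Y
  rk_submod : ∀ X Y, X ⊆ E → Y ⊆ E → rk (X ∪ Y) + rk (X ∩ Y) ≤ rk X + rk Y

namespace FinMatroid

variable {α : Type*} [DecidableEq α]

/-- Nullity: η(X) = |X| − ρ(X). -/
def eta (M : FinMatroid α) (X : Finset α) : ℕ := X.card - M.rk X

/-- A circuit is a minimal dependent set. -/
def Circuit (M : FinMatroid α) (C : Finset α) : Prop :=
  C ⊆ M.E ∧ M.rk C < C.card ∧ ∀ Y, Y ⊂ C → M.rk Y = Y.card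

/-- A cyclic set is a (possibly empty) union of circuits. -/
def Cyclic (M : FinMatroid α) (X : Finset α) : Prop :=
  X ⊆ M.E ∧ ∀ x ∈ X, ∃ C, M.Circuit C ∧ C ⊆ X ∧ x ∈ C

/-- Closure: cl(X) = {x ∈ E : ρ(X ∪ {x}) = ρ(X)}. -/
def cl (M : FinMatroid α) (X : Finset α) : Finset α :=
  M.E.filter (fun x => M.rk (insert x X) = M.rk X)

/-- A flat is a closure-closed subset of the ground set. -/
def Flat (M : FinMatroid α) (F : Finset α) : Prop :=
  F ⊆ M.E ∧ M.cl F = F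

/-- A cyclic flat is a flat that is a union of circuits. -/
def CyclicFlat (M : FinMatroid α) (F : Finset α) : Prop :=
  M.Cyclic F ∧ M.Flat F

/-- Minimum distance d = min {|X| : ρ(E \ X) < ρ(E)}. -/
noncomputable def dist (M : FinMatroid α) : ℕ :=
  sInf {m | ∃ X, X ⊆ M.E ∧ X.card = m ∧ M.rk (M.E \ X) < M.rk M.E}

/-- S is an (r,δ)-locality set: |S| ≤ r + δ − 1 and
    min {|X| : X ⊆ S, ρ(S \ X) < ρ(S)} ≥ δ. -/
def LocalitySet (M : FinMatroid α) (r δ : ℕ) (S : Finset α) : Prop :=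
  S ⊆ M.E ∧ S.card ≤ r + δ - 1 ∧
    ∀ X, X ⊆ S → M.rk (S \ X) < M.rk S → δ ≤ X.card

/-- M has all-symbol (r,δ)-locality. -/
def HasLocality (M : FinMatroid α) (r δ : ℕ) : Prop :=
  ∀ x ∈ M.E, ∃ S, x ∈ S ∧ M.LocalitySet r δ S

/-- Restriction of M to X ⊆ E. -/
def restrict (M : FinMatroid α) (X : Finset α) (hX : X ⊆ M.E) : FinMatroid α where
  E := X
  rk := M.rk
  rk_le_card := fun Y hY => M.rk_le_card Y (hY.trans hX)
  rk_mono := fun Y Z h hZ => M.rk_mono Y Z h (hZ.trans hX)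
  rk_submod := fun Y Z hY hZ => M.rk_submod Y Z (hY.trans hX) (hZ.trans hX)

end FinMatroid

namespace FinMatroid

variable {α : Type*} [DecidableEq α] (M : FinMatroid α)

lemma rk_empty : M.rk ∅ = 0 :=
  Nat.le_zero.mp (M.rk_le_card ∅ (Finset.empty_subset _))

lemma rk_union_le (D X : Finset α) (h : X ∪ D ⊆ M.E) :
    M.rk (X ∪ D) ≤ M.rk X + D.card := by
  induction D using Finset.induction_on with
  | empty => simp
  | @insert a D ha ih =>
    have hXD : X ∪ D ⊆ M.E := fun y hy => h (by
      rcases Finset.mem_union.mp hy with h1 | h1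
      · exact Finset.mem_union_left _ h1
      · exact Finset.mem_union_right _ (Finset.mem_insert_of_mem h1))
    have ha' : ({a} : Finset α) ⊆ M.E := by
      intro y hy; rw [Finset.mem_singleton] at hy; subst hy
      exact h (Finset.mem_union_right _ (Finset.mem_insert_self _ _))
    have hsub := M.rk_submod (X ∪ D) {a} hXD ha'
    have h1 : (X ∪ D) ∪ {a} = X ∪ insert a D := by ext y; simp <;> tauto
    have h2 : M.rk {a} ≤ 1 := by
      simpa using M.rk_le_card {a} ha'
    rw [h1] at hsub
    have := ih hXD
    have hc : (insert a D).card = D.card + 1 := Finset.card_insert_of_notMem ha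
    omega

lemma rk_le_rk_add (X Y : Finset α) (hXY : X ⊆ Y) (hY : Y ⊆ M.E) :
    M.rk Y ≤ M.rk X + (Y \ X).card := by
  have h1 : X ∪ (Y \ X) = Y := Finset.union_sdiff_of_subset hXY
  have := M.rk_union_le (Y \ X) X (by rw [h1]; exact hY)
  rwa [h1] at this

lemma indep_subset (X Y : Finset α) (hXY : X ⊆ Y) (hY : Y ⊆ M.E)
    (h : M.rk Y = Y.card) : M.rk X = X.card := by
  have h1 := M.rk_le_rk_add X Y hXY hY
  have h2 : (Y \ X).card = Y.card - X.card := Finset.card_sdiff_of_subset hXY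
  have h3 : X.card ≤ Y.card := Finset.card_le_card hXY
  have h4 := M.rk_le_card X (hXY.trans hY)
  omega

lemma exists_circuit_subset (T : Finset α) (hT : T ⊆ M.E) (hdep : M.rk T < T.card) :
    ∃ C, M.Circuit C ∧ C ⊆ T := by
  classical
  set F := T.powerset.filter (fun C => M.rk C < C.card) with hF
  have hTF : T ∈ F := by simp [hF, hdep]
  obtain ⟨C, hCF, hmin⟩ := F.exists_min_image Finset.card ⟨T, hTF⟩
  simp only [hF, Finset.mem_filter, Finset.mem_powerset] at hCF
  refine ⟨C, ⟨hCF.1.trans hT, hCF.2, ?_⟩, hCF.1⟩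
  intro Y hY
  by_contra hne
  have hYdep : M.rk Y < Y.card :=
    lt_of_le_of_ne (M.rk_le_card Y ((hY.subset.trans hCF.1).trans hT)) hne
  have hYF : Y ∈ F := by
    simp [hF, hY.subset.trans hCF.1, hYdep]
  have := hmin Y hYF
  have := Finset.card_lt_card hY
  omega

lemma rk_eq_card_of_all_drop : ∀ n (B : Finset α), B.card ≤ n → B ⊆ M.E →
    (∀ b ∈ B, M.rk (B \ {b}) < M.rk B) → M.rk B = B.card := by
  intro n
  induction n with
  | zero =>
    intro B hB _ _
    have : B = ∅ := Finset.card_eq_zero.mp (Nat.le_zero.mp hB)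
    simp [this, M.rk_empty]
  | succ n ih =>
    intro B hB hBE hdrop
    rcases Finset.eq_empty_or_nonempty B with rfl | ⟨b, hb⟩
    · simp [M.rk_empty]
    have hbB : {b} ⊆ B := Finset.singleton_subset_iff.mpr hb
    have hcard : (B \ {b}).card = B.card - 1 := by
      rw [Finset.card_sdiff_of_subset hbB]; simp
    have hBpos : 1 ≤ B.card := Finset.card_pos.mpr ⟨b, hb⟩
    have hup : M.rk B ≤ M.rk (B \ {b}) + 1 := by
      have := M.rk_le_rk_add (B \ {b}) B (Finset.sdiff_subset) hBE
      have h2 : (B \ (B \ {b})).card = 1 := by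
        rw [Finset.card_sdiff_of_subset Finset.sdiff_subset, hcard]; omega
      omega
    have hdb := hdrop b hb
    have heq : M.rk B = M.rk (B \ {b}) + 1 := by omega
    have hdrop' : ∀ b' ∈ B \ {b}, M.rk ((B \ {b}) \ {b'}) < M.rk (B \ {b}) := by
      intro b' hb'
      obtain ⟨hb'B, hbb'⟩ := Finset.mem_sdiff.mp hb'
      rw [Finset.mem_singleton] at hbb'
      have hdb' := hdrop b' hb'B
      have hb'B' : {b'} ⊆ B := Finset.singleton_subset_iff.mpr hb'B
      have hup' : M.rk B ≤ M.rk (B \ {b'}) + 1 := by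
        have := M.rk_le_rk_add (B \ {b'}) B (Finset.sdiff_subset) hBE
        have h2 : (B \ (B \ {b'})).card = 1 := by
          rw [Finset.card_sdiff_of_subset Finset.sdiff_subset, Finset.card_sdiff_of_subset hb'B']; simp; omega
        omega
      have heq' : M.rk B = M.rk (B \ {b'}) + 1 := by omega
      have hun : (B \ {b}) ∪ (B \ {b'}) = B := by
        ext y; simp; by_cases hy : y = b <;> by_cases hy' : y = b' <;> simp_all
      have hin : (B \ {b}) ∩ (B \ {b'}) = (B \ {b}) \ {b'} := by
        ext y; simp; tauto
      have hsub := M.rk_submod (B \ {b}) (B \ {b'})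
        (Finset.sdiff_subset.trans hBE) (Finset.sdiff_subset.trans hBE)
      rw [hun, hin] at hsub
      omega
    have := ih (B \ {b}) (by omega) (Finset.sdiff_subset.trans hBE) hdrop'
    omega

lemma exists_basis : ∀ n (Z : Finset α), Z.card ≤ n → Z ⊆ M.E →
    ∃ B, B ⊆ Z ∧ M.rk B = M.rk Z ∧ M.rk B = B.card := by
  intro n
  induction n with
  | zero =>
    intro Z hZ _
    have : Z = ∅ := Finset.card_eq_zero.mp (Nat.le_zero.mp hZ)
    exact ⟨∅, by simp [this, M.rk_empty]⟩
  | succ n ih =>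
    intro Z hZ hZE
    by_cases hind : M.rk Z = Z.card
    · exact ⟨Z, Finset.Subset.refl _, rfl, hind⟩
    · have : ¬ ∀ b ∈ Z, M.rk (Z \ {b}) < M.rk Z := by
        intro hall
        exact hind (M.rk_eq_card_of_all_drop (n+1) Z hZ hZE hall)
      push_neg at this
      obtain ⟨b, hb, hnb⟩ := this
      have heq : M.rk (Z \ {b}) = M.rk Z :=
        le_antisymm (M.rk_mono _ _ Finset.sdiff_subset hZE) hnb
      have hc : (Z \ {b}).card = Z.card - 1 := by
        rw [Finset.card_sdiff_of_subset (Finset.singleton_subset_iff.mpr hb)]; simp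
      have hpos : 1 ≤ Z.card := Finset.card_pos.mpr ⟨b, hb⟩
      obtain ⟨B, hB1, hB2, hB3⟩ := ih (Z \ {b}) (by omega) (Finset.sdiff_subset.trans hZE)
      exact ⟨B, hB1.trans Finset.sdiff_subset, by omega, hB3⟩

lemma exists_circuit_mem (Z : Finset α) (z : α) (hZ : Z ⊆ M.E) (hz : z ∈ M.E)
    (hzZ : z ∉ Z) (hrk : M.rk (insert z Z) ≤ M.rk Z) :
    ∃ C, M.Circuit C ∧ C ⊆ insert z Z ∧ z ∈ C := by
  obtain ⟨B, hBZ, hBrk, hBind⟩ := M.exists_basis Z.card Z le_rfl hZ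
  have hzB : z ∉ B := fun h => hzZ (hBZ h)
  have hiE : insert z B ⊆ M.E := Finset.insert_subset hz (hBZ.trans hZ)
  have hdep : M.rk (insert z B) < (insert z B).card := by
    have h1 : M.rk (insert z B) ≤ M.rk (insert z Z) :=
      M.rk_mono _ _ (Finset.insert_subset_insert _ hBZ) (Finset.insert_subset hz hZ)
    have h2 : (insert z B).card = B.card + 1 := Finset.card_insert_of_notMem hzB
    omega
  obtain ⟨C, hC, hCsub⟩ := M.exists_circuit_subset (insert z B) hiE hdep
  refine ⟨C, hC, hCsub.trans (Finset.insert_subset_insert _ hBZ), ?_⟩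
  by_contra hzC
  have hCB : C ⊆ B := fun y hy => by
    rcases Finset.mem_insert.mp (hCsub hy) with rfl | h
    · exact absurd hy hzC
    · exact h
  have := M.indep_subset C B hCB (hBZ.trans hZ) hBind
  exact absurd this (Nat.ne_of_lt hC.2.1)

lemma mem_cl_iff (X : Finset α) (x : α) :
    x ∈ M.cl X ↔ x ∈ M.E ∧ M.rk (insert x X) = M.rk X := Finset.mem_filter

lemma cl_subset_ground (X : Finset α) : M.cl X ⊆ M.E := Finset.filter_subset _ _

lemma subset_cl (X : Finset α) (hX : X ⊆ M.E) : X ⊆ M.cl X := by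
  intro x hx
  rw [M.mem_cl_iff]
  exact ⟨hX hx, by rw [Finset.insert_eq_self.mpr hx]⟩

lemma rk_union_cl_part (X : Finset α) (hX : X ⊆ M.E) :
    ∀ D, D ⊆ M.cl X → M.rk (X ∪ D) = M.rk X := by
  intro D
  induction D using Finset.induction_on with
  | empty => simp
  | @insert a D ha ih =>
    intro hD
    have haX : a ∈ M.cl X := hD (Finset.mem_insert_self _ _)
    have hDX : D ⊆ M.cl X := fun y hy => hD (Finset.mem_insert_of_mem hy)
    obtain ⟨haE, harkn⟩ := (M.mem_cl_iff X a).mp haX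
    have hXD : X ∪ D ⊆ M.E := Finset.union_subset hX (hDX.trans (M.cl_subset_ground X))
    have hiaX : insert a X ⊆ M.E := Finset.insert_subset haE hX
    have hun : (insert a X) ∪ (X ∪ D) = X ∪ insert a D := by ext y; simp only [Finset.mem_union, Finset.mem_insert]; tauto
    have hXint : X ⊆ (insert a X) ∩ (X ∪ D) := fun y hy => by simp [hy]
    have hintE : (insert a X) ∩ (X ∪ D) ⊆ M.E := (Finset.inter_subset_left).trans hiaX
    have hsub := M.rk_submod (insert a X) (X ∪ D) hiaX hXD
    rw [hun] at hsub
    have h1 : M.rk X ≤ M.rk ((insert a X) ∩ (X ∪ D)) := M.rk_mono _ _ hXint hintE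
    have h2 := ih hDX
    have h3 : M.rk X ≤ M.rk (X ∪ insert a D) :=
      M.rk_mono _ _ Finset.subset_union_left (Finset.union_subset hX
        ((hD.trans (M.cl_subset_ground X))))
    omega

lemma rk_cl (X : Finset α) (hX : X ⊆ M.E) : M.rk (M.cl X) = M.rk X := by
  have h1 : X ∪ M.cl X = M.cl X := Finset.union_eq_right.mpr (M.subset_cl X hX)
  have := M.rk_union_cl_part X hX (M.cl X) (Finset.Subset.refl _)
  rwa [h1] at this

lemma flat_cl (X : Finset α) (hX : X ⊆ M.E) : M.Flat (M.cl X) := by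
  refine ⟨M.cl_subset_ground X, ?_⟩
  apply Finset.Subset.antisymm
  · intro z hz
    obtain ⟨hzE, hzrk⟩ := (M.mem_cl_iff _ z).mp hz
    rw [M.rk_cl X hX] at hzrk
    rw [M.mem_cl_iff]
    refine ⟨hzE, le_antisymm ?_ (M.rk_mono _ _ (Finset.subset_insert _ _)
      (Finset.insert_subset hzE hX))⟩
    calc M.rk (insert z X) ≤ M.rk (insert z (M.cl X)) :=
          M.rk_mono _ _ (Finset.insert_subset_insert _ (M.subset_cl X hX))
            (Finset.insert_subset hzE (M.cl_subset_ground X))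
      _ = M.rk X := hzrk
  · exact M.subset_cl _ (M.cl_subset_ground X)

lemma cl_mono (X Y : Finset α) (hXY : X ⊆ Y) (hY : Y ⊆ M.E) : M.cl X ⊆ M.cl Y := by
  intro a ha
  obtain ⟨haE, hrk⟩ := (M.mem_cl_iff X a).mp ha
  rw [M.mem_cl_iff]
  refine ⟨haE, le_antisymm ?_ (M.rk_mono _ _ (Finset.subset_insert _ _)
    (Finset.insert_subset haE hY))⟩
  have hun : (insert a X) ∪ Y = insert a Y := by
    ext y
    simp only [Finset.mem_union, Finset.mem_insert]
    constructor
    · rintro ((rfl | h) | h)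
      · exact Or.inl rfl
      · exact Or.inr (hXY h)
      · exact Or.inr h
    · rintro (rfl | h)
      · exact Or.inl (Or.inl rfl)
      · exact Or.inr h
  have hXint : X ⊆ (insert a X) ∩ Y := fun y hy => by simp [hy, hXY hy]
  have hsub := M.rk_submod (insert a X) Y (Finset.insert_subset haE (hXY.trans hY)) hY
  rw [hun] at hsub
  have h1 : M.rk X ≤ M.rk ((insert a X) ∩ Y) :=
    M.rk_mono _ _ hXint ((Finset.inter_subset_right).trans hY)
  omega

lemma mem_flat_of_rk (F : Finset α) (hF : M.Flat F) (z : α) (hz : z ∈ M.E)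
    (hrk : M.rk (insert z F) ≤ M.rk F) : z ∈ F := by
  have : z ∈ M.cl F := (M.mem_cl_iff F z).mpr
    ⟨hz, le_antisymm hrk (M.rk_mono _ _ (Finset.subset_insert _ _)
      (Finset.insert_subset hz hF.1))⟩
  rwa [hF.2] at this

lemma cyclic_cl (Z : Finset α) (hZ : M.Cyclic Z) : M.Cyclic (M.cl Z) := by
  refine ⟨M.cl_subset_ground Z, ?_⟩
  intro z hz
  by_cases hzZ : z ∈ Z
  · obtain ⟨C, hC, hCZ, hzC⟩ := hZ.2 z hzZ
    exact ⟨C, hC, hCZ.trans (M.subset_cl Z hZ.1), hzC⟩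
  · obtain ⟨hzE, hrk⟩ := (M.mem_cl_iff Z z).mp hz
    obtain ⟨C, hC, hCsub, hzC⟩ := M.exists_circuit_mem Z z hZ.1 hzE hzZ (le_of_eq hrk)
    exact ⟨C, hC, hCsub.trans (Finset.insert_subset hz (M.subset_cl Z hZ.1)), hzC⟩

lemma cyclic_union (A B : Finset α) (hA : M.Cyclic A) (hB : M.Cyclic B) :
    M.Cyclic (A ∪ B) := by
  refine ⟨Finset.union_subset hA.1 hB.1, ?_⟩
  intro x hx
  rcases Finset.mem_union.mp hx with h | h
  · obtain ⟨C, hC, hCs, hxC⟩ := hA.2 x h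
    exact ⟨C, hC, hCs.trans Finset.subset_union_left, hxC⟩
  · obtain ⟨C, hC, hCs, hxC⟩ := hB.2 x h
    exact ⟨C, hC, hCs.trans Finset.subset_union_right, hxC⟩

lemma locality_cyclic (r δ : ℕ) (S : Finset α) (hδ : 2 ≤ δ)
    (hS : M.LocalitySet r δ S) : M.Cyclic S := by
  obtain ⟨hSE, _, hloc⟩ := hS
  refine ⟨hSE, ?_⟩
  intro x hx
  have hfull : M.rk (S \ {x}) = M.rk S := by
    by_contra hne
    have hlt : M.rk (S \ {x}) < M.rk S :=
      lt_of_le_of_ne (M.rk_mono _ _ Finset.sdiff_subset hSE) hne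
    have := hloc {x} (Finset.singleton_subset_iff.mpr hx) hlt
    simp at this; omega
  have hins : insert x (S \ {x}) = S := by
    ext y; by_cases hy : y = x <;> simp [hy, hx] <;> simp_all
  have hrk : M.rk (insert x (S \ {x})) ≤ M.rk (S \ {x}) := by rw [hins, hfull]
  obtain ⟨C, hC, hCsub, hxC⟩ := M.exists_circuit_mem (S \ {x}) x
    (Finset.sdiff_subset.trans hSE) (hSE hx) (by simp) hrk
  rw [hins] at hCsub
  exact ⟨C, hC, hCsub, hxC⟩

lemma locality_rk_le (r δ : ℕ) (S : Finset α) (hδ : 2 ≤ δ)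
    (hS : M.LocalitySet r δ S) : M.rk S ≤ r := by
  obtain ⟨hSE, hScard, hloc⟩ := hS
  by_cases h0 : M.rk S = 0
  · omega
  · have hScard' : δ ≤ S.card := by
      apply hloc S (Finset.Subset.refl _)
      rw [Finset.sdiff_self, M.rk_empty]; omega
    obtain ⟨X, hXS, hXcard⟩ := Finset.exists_subset_card_eq (s := S) (n := δ - 1) (by omega)
    have hfull : M.rk (S \ X) = M.rk S := by
      by_contra hne
      have hlt : M.rk (S \ X) < M.rk S :=
        lt_of_le_of_ne (M.rk_mono _ _ Finset.sdiff_subset hSE) hne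
      have := hloc X hXS hlt
      omega
    have h1 := M.rk_le_card (S \ X) (Finset.sdiff_subset.trans hSE)
    have h2 : (S \ X).card = S.card - X.card := Finset.card_sdiff_of_subset hXS
    omega

end FinMatroid

lemma step_lemma {α : Type*} [DecidableEq α] (M : FinMatroid α) (r δ : ℕ) (hδ : 2 ≤ δ)
    (hloc : M.HasLocality r δ) (Y : Finset α) (hY : M.CyclicFlat Y) (hne : Y ≠ M.E) :
    ∃ Y', M.CyclicFlat Y' ∧ Y ⊂ Y' ∧ M.rk Y' ≤ M.rk Y + r ∧
      M.eta Y + (δ - 1) ≤ M.eta Y' := by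
  obtain ⟨hYcyc, hYflat⟩ := hY
  have hYE : Y ⊆ M.E := hYflat.1
  have hex : ∃ x, x ∈ M.E ∧ x ∉ Y := by
    by_contra h; push_neg at h
    exact hne (Finset.Subset.antisymm hYE (fun y hy => h y hy))
  obtain ⟨x, hxE, hxY⟩ := hex
  obtain ⟨S, hxS, hS⟩ := hloc x hxE
  have hSE : S ⊆ M.E := hS.1
  set B := Y ∩ S with hB
  have hBY : B ⊆ Y := Finset.inter_subset_left
  have hBS : B ⊆ S := Finset.inter_subset_right
  have hBE : B ⊆ M.E := hBY.trans hYE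
  have hclB : M.cl B ⊆ Y := by
    have := M.cl_mono B Y hBY hYE; rw [hYflat.2] at this; exact this
  have hxB : M.rk B < M.rk (insert x B) := by
    rcases lt_or_ge (M.rk B) (M.rk (insert x B)) with h | h
    · exact h
    · exact absurd (hclB ((M.mem_cl_iff B x).mpr ⟨hxE, le_antisymm h
        (M.rk_mono _ _ (Finset.subset_insert _ _) (Finset.insert_subset hxE hBE))⟩)) hxY
  have hBltS : M.rk B < M.rk S :=
    lt_of_lt_of_le hxB (M.rk_mono _ _ (Finset.insert_subset hxS hBS) hSE)
  classical
  set Fam := S.powerset.filter (fun A => B ⊆ A ∧ M.rk A < M.rk S) with hFam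
  have hBF : B ∈ Fam := by
    simp only [hFam, Finset.mem_filter, Finset.mem_powerset]
    exact ⟨hBS, Finset.Subset.refl _, hBltS⟩
  obtain ⟨A, hAF, hAmax⟩ := Fam.exists_max_image Finset.card ⟨B, hBF⟩
  simp only [hFam, Finset.mem_filter, Finset.mem_powerset] at hAF
  obtain ⟨hAS, hBA, hArk⟩ := hAF
  have hAE : A ⊆ M.E := hAS.trans hSE
  have hAneS : A ≠ S := fun h => by rw [h] at hArk; omega
  have hexa : ∃ a, a ∈ S ∧ a ∉ A := by
    by_contra h; push_neg at h
    exact hAneS (Finset.Subset.antisymm hAS (fun y hy => h y hy))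
  obtain ⟨a, haS, haA⟩ := hexa
  have hiA : insert a A ⊆ S := Finset.insert_subset haS hAS
  have hrkiA : M.rk S ≤ M.rk (insert a A) := by
    by_contra h; push_neg at h
    have hmem : insert a A ∈ Fam := by
      simp only [hFam, Finset.mem_filter, Finset.mem_powerset]
      exact ⟨hiA, hBA.trans (Finset.subset_insert _ _), h⟩
    have h1 := hAmax _ hmem
    have h2 := Finset.card_insert_of_notMem haA
    omega
  have hSA1 : M.rk S ≤ M.rk A + 1 := by
    have h1 := M.rk_le_rk_add A (insert a A) (Finset.subset_insert _ _) (hiA.trans hSE)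
    have h2 : ((insert a A) \ A).card = 1 := by
      rw [Finset.card_sdiff_of_subset (Finset.subset_insert _ _), Finset.card_insert_of_notMem haA]
      omega
    have h3 := M.rk_mono _ _ hiA hSE
    omega
  have hδSA : δ ≤ (S \ A).card := by
    apply hS.2.2 (S \ A) Finset.sdiff_subset
    have hAe : S \ (S \ A) = A := by
      rw [Finset.sdiff_sdiff_self_left]; exact Finset.inter_eq_right.mpr hAS
    rw [hAe]; exact hArk
  have hAB : M.rk A ≤ M.rk B + (A \ B).card := M.rk_le_rk_add B A hBA hAE
  have hc1 : (S \ A).card = S.card - A.card := Finset.card_sdiff_of_subset hAS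
  have hc2 : (A \ B).card = A.card - B.card := Finset.card_sdiff_of_subset hBA
  have hc3 : B.card ≤ A.card := Finset.card_le_card hBA
  have hc4 : A.card ≤ S.card := Finset.card_le_card hAS
  have hYS : Y ∪ S ⊆ M.E := Finset.union_subset hYE hSE
  set Y' := M.cl (Y ∪ S) with hY'
  have hsubYS : Y ∪ S ⊆ Y' := M.subset_cl _ hYS
  have hY'rk : M.rk Y' = M.rk (Y ∪ S) := M.rk_cl _ hYS
  have hsubmod := M.rk_submod Y S hYE hSE
  rw [← hB] at hsubmod
  have hcardU : (Y ∪ S).card + (Y ∩ S).card = Y.card + S.card :=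
    Finset.card_union_add_card_inter Y S
  rw [← hB] at hcardU
  have hcardle : (Y ∪ S).card ≤ Y'.card := Finset.card_le_card hsubYS
  have hrkS : M.rk S ≤ r := M.locality_rk_le r δ S hδ hS
  have hYle := M.rk_le_card Y hYE
  have hY'le := M.rk_le_card Y' (M.cl_subset_ground _)
  refine ⟨Y', ⟨M.cyclic_cl _ (M.cyclic_union Y S hYcyc (M.locality_cyclic r δ S hδ hS)),
    M.flat_cl _ hYS⟩, ?_, ?_, ?_⟩
  · rw [Finset.ssubset_iff_of_subset (Finset.subset_union_left.trans hsubYS)]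
    exact ⟨x, hsubYS (Finset.mem_union_right _ hxS), hxY⟩
  · omega
  · unfold FinMatroid.eta
    omega

lemma chain_from {α : Type*} [DecidableEq α] (M : FinMatroid α) (r δ : ℕ) (hδ : 2 ≤ δ)
    (hloc : M.HasLocality r δ) (hEcf : M.CyclicFlat M.E) :
    ∀ n (Y0 : Finset α), (M.E \ Y0).card ≤ n → M.CyclicFlat Y0 →
    ∃ (m : ℕ) (Y : ℕ → Finset α), Y 0 = Y0 ∧ Y m = M.E ∧
      (∀ j, j ≤ m → M.CyclicFlat (Y j)) ∧
      (∀ j, 0 < j → j ≤ m → Y (j-1) ⊂ Y j ∧ M.rk (Y j) ≤ M.rk (Y (j-1)) + r ∧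
        M.eta (Y (j-1)) + (δ-1) ≤ M.eta (Y j)) := by
  intro n
  induction n with
  | zero =>
    intro Y0 hcard hY0
    have hempty : M.E \ Y0 = ∅ := Finset.card_eq_zero.mp (Nat.le_zero.mp hcard)
    have hEq : Y0 = M.E := Finset.Subset.antisymm hY0.2.1 (fun y hy => by
      by_contra h; exact absurd (Finset.mem_sdiff.mpr ⟨hy, h⟩) (by simp [hempty]))
    exact ⟨0, fun _ => M.E, by rw [hEq], rfl, fun j _ => hEcf,
      fun j hj hj' => absurd (lt_of_lt_of_le hj hj') (lt_irrefl 0)⟩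
  | succ n ih =>
    intro Y0 hcard hY0
    by_cases hEq : Y0 = M.E
    · exact ⟨0, fun _ => M.E, by rw [hEq], rfl, fun j _ => hEcf,
        fun j hj hj' => absurd (lt_of_lt_of_le hj hj') (lt_irrefl 0)⟩
    · obtain ⟨Y', hY'cf, hss, hrk, heta⟩ := step_lemma M r δ hδ hloc Y0 hY0 hEq
      have hY'E : Y' ⊆ M.E := hY'cf.2.1
      have hcard' : (M.E \ Y').card ≤ n := by
        have h1 : (M.E \ Y').card < (M.E \ Y0).card := by
          apply Finset.card_lt_card
          obtain ⟨x, hxY', hxY0⟩ := Finset.exists_of_ssubset hss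
          constructor
          · intro y hy
            obtain ⟨hyE, hyY'⟩ := Finset.mem_sdiff.mp hy
            exact Finset.mem_sdiff.mpr ⟨hyE, fun h => hyY' (hss.subset h)⟩
          · intro h
            have : x ∈ M.E \ Y' := h (Finset.mem_sdiff.mpr ⟨hY'E hxY', hxY0⟩)
            exact (Finset.mem_sdiff.mp this).2 hxY'
        omega
      obtain ⟨m, Yf, hYf0, hYfm, hcf, hstep⟩ := ih Y' hcard' hY'cf
      refine ⟨m+1, fun j => if j = 0 then Y0 else Yf (j-1), by simp, by simp [hYfm], ?_, ?_⟩
      · intro j hj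
        by_cases hj0 : j = 0
        · simp only [hj0, if_pos rfl]; exact hY0
        · simp only [if_neg hj0]; exact hcf (j-1) (by omega)
      · intro j hj hjm
        by_cases hj1 : j = 1
        · subst hj1
          simp only [show (1:ℕ)-1 = 0 from rfl, if_pos rfl, if_neg one_ne_zero, hYf0]
          exact ⟨hss, hrk, heta⟩
        · dsimp only
          rw [if_neg (show ¬(j-1 = 0) by omega), if_neg (show ¬(j = 0) by omega)]
          exact hstep (j-1) (by omega) (by omega)

theorem chain_lemma {α : Type*} [DecidableEq α] (M : FinMatroid α)
    (r δ : ℕ) (hk : 0 < M.rk M.E) (hδ : 2 ≤ δ) (hloc : M.HasLocality r δ)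
    (hE : M.CyclicFlat M.E) :
    ∃ (m : ℕ) (Y : ℕ → Finset α),
      Y m = M.E ∧
      (∀ j, j ≤ m → M.CyclicFlat (Y j)) ∧
      (∀ F, M.CyclicFlat F → Y 0 ⊆ F) ∧
      (∀ j, 0 < j → j ≤ m →
        Y (j - 1) ⊂ Y j ∧
        M.rk (Y j) ≤ M.rk (Y (j - 1)) + r ∧
        M.eta (Y (j - 1)) + (δ - 1) ≤ M.eta (Y j)) := by
  have h0 : M.CyclicFlat (M.cl ∅) :=
    ⟨M.cyclic_cl ∅ ⟨Finset.empty_subset _, by simp⟩, M.flat_cl ∅ (Finset.empty_subset _)⟩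
  obtain ⟨m, Y, hY0, hYm, hcf, hstep⟩ :=
    chain_from M r δ hδ hloc hE (M.E \ M.cl ∅).card (M.cl ∅) le_rfl h0
  refine ⟨m, Y, hYm, hcf, ?_, hstep⟩
  intro F hF
  rw [hY0]
  intro z hz
  obtain ⟨hzE, hzrk⟩ := (M.mem_cl_iff ∅ z).mp hz
  rw [M.rk_empty] at hzrk
  have hz0 : M.rk {z} = 0 := by simpa using hzrk
  apply M.mem_flat_of_rk F hF.2 z hzE
  have hsub := M.rk_submod F {z} hF.2.1 (Finset.singleton_subset_iff.mpr hzE)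
  have hu : F ∪ {z} = insert z F := by rw [Finset.union_comm, ← Finset.insert_eq]
  rw [hu, hz0] at hsub
  omega
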